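/- Let U, V ⊆ ℝᵈ be open sets and f : U → V a C² diffeomorphism. Let p⁰, pᵉ : U → (0,∞) be strictly positive C¹ functions, and define q⁰, qᵉ : V → (0,∞) by qᵉ(x) := pᵉ(f⁻¹(x)) · |det D(f⁻¹)(x)|. Then for every x ∈ V, ∇(log q⁰ − log qᵉ)(x) = (D(f⁻¹)(x))ᵀ ∇(log p⁰ − log pᵉ)(f⁻¹(x)). In particular, the gradient of the log-determinant volume term cancels in the difference of scores between environments. -/

import Mathlib

open MeasureTheory

lemma clm_apply_eq_sum_aux {d : ℕ} (L : (Fin d → ℝ) →L[ℝ] ℝ) (v : Fin d → ℝ) :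
    L v = ∑ j, v j * L (Pi.single j 1) := by
  have hv : v = ∑ j, (v j) • (Pi.single j 1 : Fin d → ℝ) := by
    funext k
    simp [Pi.single_apply, Finset.sum_apply, mul_ite]
  calc L v = L (∑ j, (v j) • (Pi.single j 1 : Fin d → ℝ)) := by rw [← hv]
    _ = ∑ j, v j * L (Pi.single j 1) := by
        rw [map_sum]; simp [smul_eq_mul]

lemma mat_eq_toMatrix'_aux {d : ℕ} (L : (Fin d → ℝ) →L[ℝ] (Fin d → ℝ)) :
    (Matrix.of fun i j : Fin d => L (Pi.single j 1) i) =
      LinearMap.toMatrix' (L : (Fin d → ℝ) →ₗ[ℝ] (Fin d → ℝ)) := by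
  ext i j
  have h : (Pi.single j 1 : Fin d → ℝ) = fun j' => if j' = j then 1 else 0 := by
    funext j'; simp [Pi.single_apply]
  simp [LinearMap.toMatrix'_apply, h]

/-- The score difference transforms by the transposed Jacobian of the
inverse map: `∇(log q⁰ − log qᵉ)(x) = (D(f⁻¹)(x))ᵀ ∇(log p⁰ − log pᵉ)(f⁻¹(x))`;
the gradient of the log-determinant volume term cancels in the difference. -/
theorem score_difference_cancels_log_det
    (d : ℕ) (U V : Set (Fin d → ℝ)) (hUopen : IsOpen U) (hVopen : IsOpen V)
    (f g : (Fin d → ℝ) → (Fin d → ℝ))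
    (hfC2 : ContDiffOn ℝ 2 f U) (hgC2 : ContDiffOn ℝ 2 g V)
    (hfV : f '' U = V)
    (hgf : ∀ s ∈ U, g (f s) = s)
    (hfg : ∀ x ∈ V, f (g x) = x)
    (p0 pe : (Fin d → ℝ) → ℝ)
    (hp0C1 : ContDiffOn ℝ 1 p0 U) (hpeC1 : ContDiffOn ℝ 1 pe U)
    (hp0pos : ∀ s ∈ U, 0 < p0 s) (hpepos : ∀ s ∈ U, 0 < pe s)
    (q0 qe : (Fin d → ℝ) → ℝ)
    (hq0 : ∀ x, q0 x = p0 (g x) *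
      |(Matrix.of fun i j : Fin d => fderiv ℝ g x (Pi.single j 1) i).det|)
    (hqe : ∀ x, qe x = pe (g x) *
      |(Matrix.of fun i j : Fin d => fderiv ℝ g x (Pi.single j 1) i).det|) :
    ∀ x ∈ V, ∀ i : Fin d,
      fderiv ℝ (fun y => Real.log (q0 y) - Real.log (qe y)) x (Pi.single i 1) =
      ∑ j : Fin d, fderiv ℝ g x (Pi.single i 1) j *
        fderiv ℝ (fun s => Real.log (p0 s) - Real.log (pe s)) (g x) (Pi.single j 1) := by
  -- g maps V into U
  have hgU : ∀ y ∈ V, g y ∈ U := by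
    intro y hy
    rw [← hfV] at hy
    obtain ⟨s, hs, rfl⟩ := hy
    rw [hgf s hs]; exact hs
  -- differentiability facts
  have hgdiff : ∀ y ∈ V, DifferentiableAt ℝ g y := fun y hy =>
    ((hgC2 y hy).contDiffAt (hVopen.mem_nhds hy)).differentiableAt two_ne_zero
  have hfdiff : ∀ s ∈ U, DifferentiableAt ℝ f s := fun s hs =>
    ((hfC2 s hs).contDiffAt (hUopen.mem_nhds hs)).differentiableAt two_ne_zero
  have hp0diff : ∀ s ∈ U, DifferentiableAt ℝ p0 s := fun s hs =>
    ((hp0C1 s hs).contDiffAt (hUopen.mem_nhds hs)).differentiableAt one_ne_zero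
  have hpediff : ∀ s ∈ U, DifferentiableAt ℝ pe s := fun s hs =>
    ((hpeC1 s hs).contDiffAt (hUopen.mem_nhds hs)).differentiableAt one_ne_zero
  -- determinant of Jacobian of g is nonzero on V
  have hdet : ∀ y ∈ V,
      (Matrix.of fun i j : Fin d => fderiv ℝ g y (Pi.single j 1) i).det ≠ 0 := by
    intro y hy
    have hgy : g y ∈ U := hgU y hy
    have hcomp : fderiv ℝ (f ∘ g) y = (fderiv ℝ f (g y)).comp (fderiv ℝ g y) :=
      fderiv_comp y (hfdiff _ hgy) (hgdiff y hy)
    have hid : (f ∘ g) =ᶠ[nhds y] id :=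
      Filter.eventually_of_mem (hVopen.mem_nhds hy) (fun z hz => hfg z hz)
    have hcompid : (fderiv ℝ f (g y)).comp (fderiv ℝ g y) =
        ContinuousLinearMap.id ℝ (Fin d → ℝ) := by
      rw [← hcomp, hid.fderiv_eq, fderiv_id]
    have hmat : (Matrix.of fun i j : Fin d => fderiv ℝ f (g y) (Pi.single j 1) i) *
        (Matrix.of fun i j : Fin d => fderiv ℝ g y (Pi.single j 1) i) = 1 := by
      rw [mat_eq_toMatrix'_aux, mat_eq_toMatrix'_aux]
      rw [← LinearMap.toMatrix'_comp]
      have : ((fderiv ℝ f (g y)) : (Fin d → ℝ) →ₗ[ℝ] (Fin d → ℝ)).comp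
          ((fderiv ℝ g y) : (Fin d → ℝ) →ₗ[ℝ] (Fin d → ℝ)) = LinearMap.id := by
        refine LinearMap.ext fun v => ?_
        simpa using congrArg (fun (L : (Fin d → ℝ) →L[ℝ] (Fin d → ℝ)) => L v) hcompid
      rw [this, LinearMap.toMatrix'_id]
    intro h0
    have := congrArg Matrix.det hmat
    rw [Matrix.det_mul, h0, mul_zero, Matrix.det_one] at this
    exact zero_ne_one this
  -- the key local identity
  intro x hx i
  set h : (Fin d → ℝ) → ℝ := fun s => Real.log (p0 s) - Real.log (pe s) with hh
  have heq : (fun y => Real.log (q0 y) - Real.log (qe y)) =ᶠ[nhds x] (h ∘ g) := by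
    refine Filter.eventually_of_mem (hVopen.mem_nhds hx) (fun z hz => ?_)
    have hgz : g z ∈ U := hgU z hz
    have hp0z := (hp0pos _ hgz).ne'
    have hpez := (hpepos _ hgz).ne'
    have hdz : |(Matrix.of fun i j : Fin d => fderiv ℝ g z (Pi.single j 1) i).det| ≠ 0 :=
      abs_ne_zero.mpr (hdet z hz)
    simp only [hq0, hqe, hh, Function.comp_apply]
    rw [Real.log_mul hp0z hdz, Real.log_mul hpez hdz]
    ring
  -- differentiability of h at g x
  have hgx : g x ∈ U := hgU x hx
  have hhdiff : DifferentiableAt ℝ h (g x) :=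
    ((hp0diff _ hgx).log (hp0pos _ hgx).ne').sub ((hpediff _ hgx).log (hpepos _ hgx).ne')
  have hhdiffU : ∀ s ∈ U, DifferentiableAt ℝ h s := fun s hs =>
    ((hp0diff _ hs).log (hp0pos _ hs).ne').sub ((hpediff _ hs).log (hpepos _ hs).ne')
  rw [heq.fderiv_eq]
  have hchain : fderiv ℝ (h ∘ g) x = (fderiv ℝ h (g x)).comp (fderiv ℝ g x) :=
    fderiv_comp x hhdiff (hgdiff x hx)
  rw [hchain]
  simp only [ContinuousLinearMap.comp_apply]
  exact clm_apply_eq_sum_aux (fderiv ℝ h (g x)) (fderiv ℝ g x (Pi.single i 1))
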